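/- For every k ≥ 1 there exists a continuous map f : S¹ → ℝ^{2k+1} with f(−z) = −f(z) for all z ∈ S¹, such that every finite subset X ⊆ S¹ for which 0 lies in the convex hull of f(X) has diameter at least π − π/(2k+1). -/

import Mathlib

/-!
Put `2n` grid points `g j = exp (iπj/n)` on the circle, so that `g (j + n) = -g j`, and let `b j`
be the hat function of angular radius `π/n` centred at `g j`; the map
`z ↦ (b i z - b (i + n) z)_{i < n}` is continuous and odd. If all distances in `X` are below
`π - π/n`, then by the triangle inequality for angles no antipodal pair `g j`, `g (j + n)` both
have a point of `X` within `π/(2n)`. So there are weights `w j ∈ {-1, 0, 1}` with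
`w (j + n) = -w j` and `w j = 1` whenever `g j` has a point of `X` within `π/(2n)`. At `x ∈ X`
only the two grid points bracketing `x` carry nonzero hats, whose values interpolate linearly,
and the nearer one has weight `1`; hence `⟪w, f x⟫ = ∑ j, w j * b j x > 0`, and the half-space
`⟪w, ·⟫ > 0` separates `f '' X` from `0`.
-/

open Metric

/-- The arc-length metric on the unit circle in `ℂ`: for unit complex numbers `z, w`
we have `circleDist z (exp (θ * I) * z) = |θ|` whenever `|θ| ≤ π`. -/
noncomputable def circleDist (z w : ℂ) : ℝ := |Complex.arg (w / z)|

open Real Complex InnerProductGeometry Finset Function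

theorem Function.Periodic.sum_range_int_add {M : Type*} [AddCancelCommMonoid M] {c : ℤ → M}
    {N : ℕ} (h : Periodic c N) (a : ℤ) : ∑ r ∈ range N, c (a + r) = ∑ r ∈ range N, c r := by
  have step (a : ℤ) : ∑ r ∈ range N, c (a + 1 + r) = ∑ r ∈ range N, c (a + r) := by
    have h₁ := sum_range_succ' (fun r : ℕ => c (a + r)) N
    rw [sum_range_succ, Nat.cast_zero, add_zero, h a] at h₁
    simpa only [Nat.cast_succ, add_assoc, add_comm (1 : ℤ)] using (add_right_cancel h₁).symm
  induction a using Int.induction_on with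
  | zero => simp
  | succ a ih => rw [step, ih]
  | pred a ih => rw [← ih, ← step, sub_add_cancel]

theorem exists_antiperiodic_weight {P : ℤ → Prop} {p : ℤ} (hP : Periodic P (2 * p))
    (hdisj : ∀ j, P j → ¬P (j + p)) :
    ∃ w : ℤ → ℝ, Antiperiodic w p ∧ (∀ j, P j → w j = 1) ∧ ∀ j, -1 ≤ w j := by
  classical
  refine ⟨fun j => if P j then 1 else if P (j + p) then -1 else 0, fun j => ?_,
    fun j hj => if_pos hj, fun j => by dsimp only; split_ifs <;> norm_num⟩
  have hP2 : P (j + p + p) = P j := by rw [add_assoc, ← two_mul, hP]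
  by_cases hj : P j
  · simp [hj, hP2, hdisj j hj]
  · by_cases hjp : P (j + p) <;> simp [hj, hjp, hP2]

theorem circleDist_eq_angle {x y : ℂ} (hx : x ≠ 0) (hy : y ≠ 0) : circleDist x y = angle x y := by
  rw [circleDist, ← angle_eq_abs_arg hy hx, angle_comm]

theorem Complex.angle_exp_exp_of_abs_le {x y : ℝ} (h : |x - y| ≤ π) :
    angle (exp (x * I)) (exp (y * I)) = |x - y| := by
  rcases (abs_le.mp h).1.lt_or_eq with hlt | heq
  · rw [angle_exp_exp, (toIocMod_eq_self _).2 ⟨by linarith, by linarith [(abs_le.mp h).2]⟩]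
  · rw [angle_comm, angle_exp_exp, (toIocMod_eq_self _).2 ⟨by linarith [pi_pos], by linarith⟩,
      abs_sub_comm]

noncomputable def gridPoint (n : ℕ) (j : ℤ) : ℂ := exp (↑(j * π / n) * I)

noncomputable def gridHat (n : ℕ) (j : ℤ) (z : ℂ) : ℝ :=
  max 0 (1 - n / π * angle z (gridPoint n j))

noncomputable def oddHatMap (n : ℕ) (z : ℂ) : EuclideanSpace ℝ (Fin n) :=
  WithLp.toLp 2 fun i => gridHat n i z - gridHat n (i + n) z

section
variable {n : ℕ}

theorem gridPoint_ne_zero (n : ℕ) (j : ℤ) : gridPoint n j ≠ 0 := exp_ne_zero _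

theorem gridPoint_add_natCast (hn : n ≠ 0) (j : ℤ) : gridPoint n (j + n) = -gridPoint n j := by
  have : ((j + n : ℤ) : ℝ) * π / n = j * π / n + π := by push_cast; field_simp
  rw [gridPoint, this, ofReal_add, add_mul, Complex.exp_add, exp_pi_mul_I, mul_neg_one, gridPoint]

theorem periodic_gridPoint (hn : n ≠ 0) : Periodic (gridPoint n) (2 * n) := fun j => by
  rw [two_mul, ← add_assoc, gridPoint_add_natCast hn, gridPoint_add_natCast hn, neg_neg]

theorem gridHat_neg (hn : n ≠ 0) (j : ℤ) (z : ℂ) : gridHat n j (-z) = gridHat n (j + n) z := by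
  rw [gridHat, gridHat, gridPoint_add_natCast hn, angle_neg_left, angle_neg_right]

theorem periodic_gridHat (hn : n ≠ 0) (z : ℂ) : Periodic (gridHat n · z) (2 * n) :=
  (periodic_gridPoint hn).comp fun g => max 0 (1 - n / π * angle z g)

theorem continuousOn_gridHat (n : ℕ) (j : ℤ) : ContinuousOn (gridHat n j) {0}ᶜ := fun z hz => by
  have hangle : ContinuousAt (fun w : ℂ => angle w (gridPoint n j)) z :=
    (continuousAt_angle (x := (z, gridPoint n j)) hz (gridPoint_ne_zero n j)).comp
      (f := fun w => (w, gridPoint n j)) (by fun_prop)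
  refine ContinuousAt.continuousWithinAt ?_
  show ContinuousAt (fun w => max 0 (1 - n / π * angle w (gridPoint n j))) z
  fun_prop

theorem oddHatMap_neg (hn : n ≠ 0) (z : ℂ) : oddHatMap n (-z) = -oddHatMap n z := by
  ext i
  have : gridHat n (i + n + n) z = gridHat n i z := by
    rw [add_assoc, ← two_mul]; exact periodic_gridHat hn z i
  simp only [oddHatMap, PiLp.neg_apply, gridHat_neg hn, this, neg_sub]

theorem continuousOn_oddHatMap (n : ℕ) : ContinuousOn (oddHatMap n) {0}ᶜ :=
  (PiLp.continuous_toLp 2 _).comp_continuousOn <|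
    continuousOn_pi.2 fun i => (continuousOn_gridHat n i).sub (continuousOn_gridHat n _)

theorem angle_exp_gridPoint (hn : n ≠ 0) {t : ℝ} {j : ℤ} (h : |t - j| ≤ n) :
    angle (exp (↑(t * π / n) * I)) (gridPoint n j) = |t - j| * π / n := by
  have hn' : (0 : ℝ) < n := by positivity
  have habs : |t * π / n - j * π / n| = |t - j| * π / n := by
    rw [← sub_div, ← sub_mul, abs_div, abs_mul, abs_of_pos pi_pos, abs_of_pos hn']
  rw [gridPoint, angle_exp_exp_of_abs_le, habs]
  rw [habs, div_le_iff₀ hn', mul_comm π]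
  gcongr

theorem gridHat_exp (hn : n ≠ 0) {t : ℝ} {j : ℤ} (h : |t - j| ≤ n) :
    gridHat n j (exp (↑(t * π / n) * I)) = max 0 (1 - |t - j|) := by
  rw [gridHat, angle_exp_gridPoint hn h]
  field_simp

theorem gridHat_exp_floor_sub_add (hn : n ≠ 0) (t : ℝ) {r : ℕ} (hr : r < 2 * n) :
    gridHat n (⌊t⌋ - n + 1 + r) (exp (↑(t * π / n) * I)) =
      max 0 (1 - |Int.fract t + n - 1 - r|) := by
  have hr' : (r : ℝ) + 1 ≤ 2 * n := by exact_mod_cast hr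
  have hdiff : t - ((⌊t⌋ - n + 1 + r : ℤ) : ℝ) = Int.fract t + n - 1 - r := by
    rw [← Int.self_sub_floor]; push_cast; ring
  have hle : |t - ((⌊t⌋ - n + 1 + r : ℤ) : ℝ)| ≤ n := by
    rw [hdiff, abs_le]; constructor <;> linarith [Int.fract_nonneg t, Int.fract_lt_one t]
  rw [gridHat_exp hn hle, hdiff]

theorem sum_range_mul_gridHat_exp (hn : n ≠ 0) {w : ℤ → ℝ} (hw : Periodic w (2 * n)) (t : ℝ) :
    ∑ j ∈ range (2 * n), w j * gridHat n j (exp (↑(t * π / n) * I)) =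
      w ⌊t⌋ * (1 - Int.fract t) + w (⌊t⌋ + 1) * Int.fract t := by
  have hc : Periodic (fun j => w j * gridHat n j (exp (↑(t * π / n) * I))) ((2 * n : ℕ) : ℤ) := by
    push_cast; exact hw.mul (periodic_gridHat hn _)
  -- On the window `⌊t⌋ - n < j ≤ ⌊t⌋ + n` all angles to `exp (tπ/n · I)` are at most `π`,
  -- and only `j = ⌊t⌋, ⌊t⌋ + 1` are closer than `π/n`.
  have hn1 : (1 : ℝ) ≤ n := by exact_mod_cast Nat.one_le_iff_ne_zero.2 hn
  have hfr := Int.fract_nonneg t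
  have hfr1 := Int.fract_lt_one t
  rw [← hc.sum_range_int_add (⌊t⌋ - n + 1), sum_eq_add (n - 1) n (by omega)]
  · rw [gridHat_exp_floor_sub_add hn t (by omega), gridHat_exp_floor_sub_add hn t (by omega)]
    have e1 : ⌊t⌋ - n + 1 + ((n - 1 : ℕ) : ℤ) = ⌊t⌋ := by omega
    have e2 : ((n - 1 : ℕ) : ℝ) = n - 1 := by rw [Nat.cast_sub (by omega)]; simp
    rw [e1, e2, show Int.fract t + n - 1 - (n - 1) = Int.fract t by ring, abs_of_nonneg hfr,
      show Int.fract t + n - 1 - n = -(1 - Int.fract t) by ring, abs_neg, abs_of_pos (by linarith),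
      max_eq_right (by linarith), max_eq_right (by linarith)]
    ring_nf
  · intro r hr hne
    rw [gridHat_exp_floor_sub_add hn t (mem_range.1 hr), max_eq_left, mul_zero]
    rcases Nat.lt_or_gt_of_ne hne.2 with hlt | hgt
    · have : (r : ℝ) + 2 ≤ n := by exact_mod_cast (by omega : r + 2 ≤ n)
      linarith [le_abs_self (Int.fract t + n - 1 - r)]
    · have : (n : ℝ) + 1 ≤ r := by exact_mod_cast hgt
      linarith [neg_abs_le (Int.fract t + n - 1 - r)]
  · intro h; exact absurd (mem_range.2 (by omega)) h
  · intro h; exact absurd (mem_range.2 (by omega)) h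

theorem inner_toLp_oddHatMap {w : ℤ → ℝ} (hw : Antiperiodic w n) (z : ℂ) :
    inner ℝ (WithLp.toLp 2 fun i : Fin n => w i) (oddHatMap n z) =
      ∑ j ∈ range (2 * n), w j * gridHat n j z := by
  simp only [PiLp.inner_apply, oddHatMap, Real.inner_apply]
  rw [Fin.sum_univ_eq_sum_range (fun i => w i * (gridHat n i z - gridHat n (i + n) z)), two_mul,
    sum_range_add, ← sum_add_distrib]
  refine sum_congr rfl fun i _ => ?_
  rw [Nat.cast_add, add_comm (n : ℤ), hw]
  ring

theorem exists_inner_oddHatMap_pos (hn : n ≠ 0) {X : Finset ℂ} (hX : ↑X ⊆ sphere (0 : ℂ) 1)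
    (hsmall : ∀ x ∈ X, ∀ y ∈ X, circleDist x y < π - π / n) :
    ∃ v : EuclideanSpace ℝ (Fin n), ∀ x ∈ X, 0 < inner ℝ v (oddHatMap n x) := by
  have hn' : (0 : ℝ) < n := by positivity
  have hn1 : (1 : ℝ) ≤ n := by exact_mod_cast Nat.one_le_iff_ne_zero.2 hn
  have hnorm : ∀ x ∈ X, ‖x‖ = 1 := fun x hx => mem_sphere_zero_iff_norm.1 (hX hx)
  have hne : ∀ x ∈ X, x ≠ 0 := fun x hx => norm_pos_iff.1 (by rw [hnorm x hx]; exact one_pos)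
  set P : ℤ → Prop := fun j => ∃ y ∈ X, angle y (gridPoint n j) ≤ π / (2 * n) with hP
  have hPper : Periodic P (2 * n) := fun j => by simp only [hP, periodic_gridPoint hn j]
  have hdisj : ∀ j, P j → ¬P (j + n) := by
    rintro j ⟨y, hy, hyj⟩ ⟨z, hz, hzj⟩
    rw [gridPoint_add_natCast hn, angle_neg_right] at hzj
    have htri := angle_le_angle_add_angle z y (gridPoint n j)
    have hyz := hsmall y hy z hz
    rw [circleDist_eq_angle (hne y hy) (hne z hz), angle_comm] at hyz
    have : π / (2 * n) + π / (2 * n) = π / n := by field_simp; ring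
    linarith
  obtain ⟨w, hw, hwP, hw_ge⟩ := exists_antiperiodic_weight hPper hdisj
  refine ⟨WithLp.toLp 2 fun i => w i, fun x hx => ?_⟩
  set t := arg x * n / π
  have hxt : x = exp (↑(t * π / n) * I) := by
    rw [show t * π / n = arg x by simp only [t]; field_simp]
    simpa [hnorm x hx] using (norm_mul_exp_arg_mul_I x).symm
  have hnear : ∀ j : ℤ, |t - j| ≤ 1 / 2 → w j = 1 := fun j hj => hwP j ⟨x, hx, by
    rw [hxt, angle_exp_gridPoint hn (by linarith)]
    calc |t - j| * π / n ≤ 1 / 2 * π / n := by gcongr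
      _ = π / (2 * n) := by ring⟩
  have hfr := Int.fract_nonneg t
  have hfr1 := Int.fract_lt_one t
  have hw₀ : Int.fract t ≤ 1 / 2 → w ⌊t⌋ = 1 := fun h => hnear _ <| by
    rwa [Int.self_sub_floor, abs_of_nonneg hfr]
  have hw₁ : 1 / 2 ≤ Int.fract t → w (⌊t⌋ + 1) = 1 := fun h => hnear _ <| by
    rw [Int.cast_add, Int.cast_one, ← sub_sub, Int.self_sub_floor, abs_of_neg (by linarith)]
    linarith
  rw [inner_toLp_oddHatMap hw, hxt, sum_range_mul_gridHat_exp hn hw.periodic_two_mul t]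
  rcases lt_trichotomy (Int.fract t) (1 / 2) with h | h | h
  · nlinarith [hw₀ h.le, hw_ge (⌊t⌋ + 1)]
  · rw [hw₀ h.le, hw₁ h.ge]; linarith
  · nlinarith [hw₁ h.le, hw_ge ⌊t⌋]

end

theorem exists_circleDist_ge_of_zero_mem_convexHull {n : ℕ} (hn : n ≠ 0) {X : Finset ℂ}
    (hX : ↑X ⊆ sphere (0 : ℂ) 1) (h0 : 0 ∈ convexHull ℝ (oddHatMap n '' ↑X)) :
    ∃ x ∈ X, ∃ y ∈ X, π - π / n ≤ circleDist x y := by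
  by_contra! hsmall
  obtain ⟨v, hv⟩ := exists_inner_oddHatMap_pos hn hX hsmall
  have hpos : 0 ∈ {u | 0 < inner ℝ v u} :=
    convexHull_min (by rintro _ ⟨x, hx, rfl⟩; exact hv x hx)
      (convex_halfSpace_gt (innerₗ _ v).isLinear 0) h0
  simp at hpos

theorem stmt4 (k : ℕ) :
    ∃ f : ℂ → EuclideanSpace ℝ (Fin (2 * k + 1)),
      ContinuousOn f (sphere (0 : ℂ) 1) ∧
      (∀ z ∈ sphere (0 : ℂ) 1, f (-z) = -f z) ∧
      ∀ X : Finset ℂ, ↑X ⊆ sphere (0 : ℂ) 1 →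
        (0 : EuclideanSpace ℝ (Fin (2 * k + 1))) ∈ convexHull ℝ (f '' ↑X) →
        ∃ x ∈ X, ∃ y ∈ X, Real.pi - Real.pi / (2 * k + 1) ≤ circleDist x y := by
  have hn : 2 * k + 1 ≠ 0 := by omega
  refine ⟨oddHatMap (2 * k + 1), (continuousOn_oddHatMap _).mono fun z hz => ?_,
    fun z _ => oddHatMap_neg hn z, fun X hX h0 => ?_⟩
  · exact ne_zero_of_mem_sphere one_ne_zero ⟨z, hz⟩
  · exact_mod_cast exists_circleDist_ge_of_zero_mem_convexHull hn hX h0
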